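/- Let (Γ,S) be a δ-hyperbolic group and let C₁₁ ≥ 0 be a constant. There exist constants C₁₂, C₁₃ ≥ 0, depending only on Γ, S, δ and C₁₁, such that for every v ∈ Γ of minimal word length in its conjugacy class ⟨v⟩ and every map σ_v : ⟨v⟩ → Γ satisfying σ_v(u)·v·σ_v(u)⁻¹ = u and ℓ_S(σ_v(u)) ≤ ½·ℓ_S(u) + C₁₁ for all u ∈ ⟨v⟩, one has d_S(σ_v(gug⁻¹), g·σ_v(u)) ≤ C₁₂·ℓ_S(g) + ℓ_S(v) + C₁₃ for all g ∈ Γ and all u ∈ ⟨v⟩. -/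
import Mathlib


noncomputable section

/-- Word length with respect to a generating set `S`. -/
def wordLen {Γ : Type} [Group Γ] (S : Set Γ) (g : Γ) : ℕ :=
  sInf {n | ∃ l : List Γ, (∀ x ∈ l, x ∈ S) ∧ l.length = n ∧ l.prod = g}

/-- The word metric `d_S(g,h) = ℓ_S(g⁻¹h)`. -/
def dS {Γ : Type} [Group Γ] (S : Set Γ) (g h : Γ) : ℕ := wordLen S (g⁻¹ * h)

/-- The Gromov product `(x|y)_w` with respect to the word metric. -/
def gpS {Γ : Type} [Group Γ] (S : Set Γ) (x y w : Γ) : ℝ :=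
  ((dS S x w : ℝ) + (dS S y w : ℝ) - (dS S x y : ℝ)) / 2

/-- `(Γ,S)` is a `δ`-hyperbolic group: `S` is a finite symmetric generating set and
the word metric satisfies the four point condition with constant `δ`. -/
def IsHypGroup {Γ : Type} [Group Γ] (S : Set Γ) (δ : ℝ) : Prop :=
  S.Finite ∧ (∀ s ∈ S, s⁻¹ ∈ S) ∧ Subgroup.closure S = ⊤ ∧
  ∀ x y z w : Γ, min (gpS S x y w) (gpS S y z w) - δ ≤ gpS S x z w

section Aux

variable {Γ : Type} [Group Γ] {S : Set Γ}

lemma exists_rep (hsym : ∀ s ∈ S, s⁻¹ ∈ S) (hgen : Subgroup.closure S = ⊤) (g : Γ) :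
    ∃ l : List Γ, (∀ x ∈ l, x ∈ S) ∧ l.prod = g := by
  have hg : g ∈ Subgroup.closure S := hgen ▸ Subgroup.mem_top g
  induction hg using Subgroup.closure_induction with
  | mem s hs => exact ⟨[s], by simpa using hs, by simp⟩
  | one => exact ⟨[], by simp, by simp⟩
  | mul x y _ _ hx hy =>
    obtain ⟨l₁, h₁, p₁⟩ := hx; obtain ⟨l₂, h₂, p₂⟩ := hy
    refine ⟨l₁ ++ l₂, ?_, by simp [p₁, p₂]⟩
    intro z hz
    rcases List.mem_append.mp hz with h | h
    exacts [h₁ z h, h₂ z h]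
  | inv x _ hx =>
    obtain ⟨l, hl, pl⟩ := hx
    refine ⟨(l.map fun z => z⁻¹).reverse, ?_, ?_⟩
    · intro z hz
      simp only [List.mem_reverse, List.mem_map] at hz
      obtain ⟨w, hw, rfl⟩ := hz
      exact hsym w (hl w hw)
    · rw [← List.prod_inv_reverse, pl]

lemma wordLen_le (g : Γ) (l : List Γ) (hl : ∀ x ∈ l, x ∈ S) (hp : l.prod = g) :
    wordLen S g ≤ l.length :=
  Nat.sInf_le ⟨l, hl, rfl, hp⟩

lemma wordLen_spec (hsym : ∀ s ∈ S, s⁻¹ ∈ S) (hgen : Subgroup.closure S = ⊤) (g : Γ) :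
    ∃ l : List Γ, (∀ x ∈ l, x ∈ S) ∧ l.length = wordLen S g ∧ l.prod = g := by
  obtain ⟨l, hl, hp⟩ := exists_rep hsym hgen g
  have hne : {n | ∃ l : List Γ, (∀ x ∈ l, x ∈ S) ∧ l.length = n ∧ l.prod = g}.Nonempty :=
    ⟨l.length, l, hl, rfl, hp⟩
  obtain ⟨l', hl', hlen, hp'⟩ := Nat.sInf_mem hne
  exact ⟨l', hl', hlen, hp'⟩

lemma wordLen_mul_le (hsym : ∀ s ∈ S, s⁻¹ ∈ S) (hgen : Subgroup.closure S = ⊤) (g h : Γ) :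
    wordLen S (g * h) ≤ wordLen S g + wordLen S h := by
  obtain ⟨l₁, h₁, len₁, p₁⟩ := wordLen_spec hsym hgen g
  obtain ⟨l₂, h₂, len₂, p₂⟩ := wordLen_spec hsym hgen h
  calc wordLen S (g * h) ≤ (l₁ ++ l₂).length := by
        refine wordLen_le _ _ ?_ (by simp [p₁, p₂])
        intro z hz; rcases List.mem_append.mp hz with hh | hh
        exacts [h₁ z hh, h₂ z hh]
    _ = wordLen S g + wordLen S h := by simp [len₁, len₂]

lemma wordLen_inv_le (hsym : ∀ s ∈ S, s⁻¹ ∈ S) (hgen : Subgroup.closure S = ⊤) (g : Γ) :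
    wordLen S g⁻¹ ≤ wordLen S g := by
  obtain ⟨l, hl, len, p⟩ := wordLen_spec hsym hgen g
  calc wordLen S g⁻¹ ≤ ((l.map fun z => z⁻¹).reverse).length := by
        refine wordLen_le _ _ ?_ (by rw [← List.prod_inv_reverse, p])
        intro z hz
        simp only [List.mem_reverse, List.mem_map] at hz
        obtain ⟨w, hw, rfl⟩ := hz
        exact hsym w (hl w hw)
    _ = wordLen S g := by simp [len]

lemma wordLen_inv (hsym : ∀ s ∈ S, s⁻¹ ∈ S) (hgen : Subgroup.closure S = ⊤) (g : Γ) :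
    wordLen S g⁻¹ = wordLen S g :=
  le_antisymm (wordLen_inv_le hsym hgen g) (by
    simpa using wordLen_inv_le hsym hgen g⁻¹)


end Aux

/-- in a δ-hyperbolic group there are constants `C₁₂, C₁₃` (depending only
on `Γ, S, δ, C₁₁`) such that every section `σ_v` as in Statement 11 is approximately
equivariant: `d_S(σ_v(gug⁻¹), g·σ_v(u)) ≤ C₁₂·ℓ_S(g) + ℓ_S(v) + C₁₃`. -/
theorem conjugation_section_almost_equivariant {Γ : Type} [Group Γ] (S : Set Γ)
    (δ : ℝ) (hδ : 0 ≤ δ) (hS : IsHypGroup S δ) (C₁₁ : ℝ) (hC₁₁ : 0 ≤ C₁₁) :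
    ∃ C₁₂ C₁₃ : ℝ, 0 ≤ C₁₂ ∧ 0 ≤ C₁₃ ∧
      ∀ v : Γ, (∀ g : Γ, wordLen S v ≤ wordLen S (g * v * g⁻¹)) →
      ∀ σ : Γ → Γ,
        (∀ u : Γ, (∃ g : Γ, g * v * g⁻¹ = u) →
          σ u * v * (σ u)⁻¹ = u ∧
          (wordLen S (σ u) : ℝ) ≤ (wordLen S u : ℝ) / 2 + C₁₁) →
        ∀ (g u : Γ), (∃ g' : Γ, g' * v * g'⁻¹ = u) →
          (dS S (σ (g * u * g⁻¹)) (g * σ u) : ℝ) ≤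
            C₁₂ * (wordLen S g : ℝ) + (wordLen S v : ℝ) + C₁₃ := by
  obtain ⟨hfin, hsym, hgen, hhyp⟩ := hS
  refine ⟨2, 2 * C₁₁ + 2 * δ, by norm_num, by positivity, ?_⟩
  intro v hmin σ hσ g u hu
  obtain ⟨g', hg'⟩ := hu
  have hu' : ∃ g'' : Γ, g'' * v * g''⁻¹ = g * u * g⁻¹ := ⟨g * g', by rw [← hg']; group⟩
  obtain ⟨ha_conj, ha_len⟩ := hσ _ hu'
  obtain ⟨hb_conj, hb_len⟩ := hσ u ⟨g', hg'⟩
  set u' := g * u * g⁻¹ with hu'def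
  set a := σ u' with hadef
  set b := g * σ u with hbdef
  have hb' : b * v * b⁻¹ = u' := by
    have h : b * v * b⁻¹ = g * (σ u * v * (σ u)⁻¹) * g⁻¹ := by rw [hbdef]; group
    rw [h, hb_conj]
  have hau' : a⁻¹ * u' = v * a⁻¹ := by rw [← ha_conj]; group
  have hu'b : u'⁻¹ * b = b * v⁻¹ := by rw [← hb']; group
  have hdau' : dS S a u' ≤ wordLen S v + wordLen S a := by
    rw [dS, hau']
    calc wordLen S (v * a⁻¹) ≤ wordLen S v + wordLen S a⁻¹ := wordLen_mul_le hsym hgen _ _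
      _ = wordLen S v + wordLen S a := by rw [wordLen_inv hsym hgen]
  have hdu'b : dS S u' b ≤ wordLen S b + wordLen S v := by
    rw [dS, hu'b]
    calc wordLen S (b * v⁻¹) ≤ wordLen S b + wordLen S v⁻¹ := wordLen_mul_le hsym hgen _ _
      _ = wordLen S b + wordLen S v := by rw [wordLen_inv hsym hgen]
  have hB : wordLen S b ≤ wordLen S g + wordLen S (σ u) := wordLen_mul_le hsym hgen _ _
  have hU : wordLen S u ≤ wordLen S g + wordLen S u' + wordLen S g := by
    have h1 : u = g⁻¹ * u' * g := by rw [hu'def]; group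
    calc wordLen S u = wordLen S (g⁻¹ * u' * g) := by rw [← h1]
      _ ≤ wordLen S (g⁻¹ * u') + wordLen S g := wordLen_mul_le hsym hgen _ _
      _ ≤ wordLen S g⁻¹ + wordLen S u' + wordLen S g := by
          have := wordLen_mul_le hsym hgen g⁻¹ u'; omega
      _ = wordLen S g + wordLen S u' + wordLen S g := by rw [wordLen_inv hsym hgen]
  have dS_one : ∀ x : Γ, dS S x 1 = wordLen S x := fun x => by
    rw [dS, mul_one, wordLen_inv hsym hgen]
  have hyp := hhyp a u' b 1
  rw [gpS, gpS, gpS, dS_one a, dS_one u', dS_one b] at hyp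
  have hdau'' : (dS S a u' : ℝ) ≤ (wordLen S v : ℝ) + (wordLen S a : ℝ) := by
    exact_mod_cast hdau'
  have hdu'b' : (dS S u' b : ℝ) ≤ (wordLen S b : ℝ) + (wordLen S v : ℝ) := by
    exact_mod_cast hdu'b
  have hB' : (wordLen S b : ℝ) ≤ (wordLen S g : ℝ) + (wordLen S (σ u) : ℝ) := by
    exact_mod_cast hB
  have hU' : (wordLen S u : ℝ) ≤ (wordLen S g : ℝ) + (wordLen S u' : ℝ) + (wordLen S g : ℝ) := by
    exact_mod_cast hU
  have p1 : ((wordLen S u' : ℝ) - (wordLen S v : ℝ)) / 2 ≤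
      ((wordLen S a : ℝ) + (wordLen S u' : ℝ) - (dS S a u' : ℝ)) / 2 := by linarith
  have p2 : ((wordLen S u' : ℝ) - (wordLen S v : ℝ)) / 2 ≤
      ((wordLen S u' : ℝ) + (wordLen S b : ℝ) - (dS S u' b : ℝ)) / 2 := by linarith
  have hmin' := le_min p1 p2
  have key : ((wordLen S u' : ℝ) - (wordLen S v : ℝ)) / 2 - δ ≤
      ((wordLen S a : ℝ) + (wordLen S b : ℝ) - (dS S a b : ℝ)) / 2 := by linarith
  linarith
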